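/- Let f : (X, p̄) → (Y, q̄) be a stratified map between stratified perverse spaces satisfying f*Dq̄ ≤ Dp̄ (i.e. Dq̄(S^f) ≤ Dp̄(S) for every stratum S of X). Then σ ↦ f ∘ σ on filtered simplices induces a morphism of chain complexes f_* : C_*^{p̄}(X;G) → C_*^{q̄}(Y;G). -/

import Mathlib

noncomputable section
open Set

universe u v w


/-- A filtered space of formal dimension `dim` : closed subspaces
`∅ = X_{-1} ⊆ X_0 ⊆ … ⊆ X_n = X` with `X_n \ X_{n-1} ≠ ∅`. -/
structure FilteredSpace (X : Type u) [TopologicalSpace X] : Type u where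
  dim : ℕ
  filt : ℤ → Set X
  filt_neg : ∀ i : ℤ, i < 0 → filt i = ∅
  filt_mono : Monotone filt
  filt_closed : ∀ i, IsClosed (filt i)
  filt_top : ∀ i : ℤ, (dim : ℤ) ≤ i → filt i = Set.univ
  reg_nonempty : (filt dim \ filt ((dim : ℤ) - 1)).Nonempty

namespace FilteredSpace

variable {X : Type u} {Y : Type v} [TopologicalSpace X] [TopologicalSpace Y]

/-- `S` is a stratum of formal dimension `i` : a connected component of `X_i \ X_{i-1}`. -/
def IsStratumDim (F : FilteredSpace X) (S : Set X) (i : ℤ) : Prop :=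
  ∃ x ∈ F.filt i \ F.filt (i-1), S = connectedComponentIn (F.filt i \ F.filt (i-1)) x

/-- `S` is a stratum of the filtered space. -/
def IsStratum (F : FilteredSpace X) (S : Set X) : Prop := ∃ i, F.IsStratumDim S i

open Classical in
/-- The formal dimension of a stratum. -/
def stratumDim (F : FilteredSpace X) (S : Set X) : ℤ :=
  if h : ∃ i, F.IsStratumDim S i then h.choose else 0

/-- The codimension of a stratum : `dim X - dim S`. -/
def codim (F : FilteredSpace X) (S : Set X) : ℤ := (F.dim : ℤ) - F.stratumDim S

/-- A regular stratum : one contained in `X_n \ X_{n-1}`. -/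
def IsRegularStratum (F : FilteredSpace X) (S : Set X) : Prop :=
  F.IsStratumDim S (F.dim : ℤ)

/-- A singular stratum. -/
def IsSingularStratum (F : FilteredSpace X) (S : Set X) : Prop :=
  F.IsStratum S ∧ ¬ F.IsRegularStratum S

/-- The singular set `Σ = X_{n-1}`. -/
def sing (F : FilteredSpace X) : Set X := F.filt ((F.dim : ℤ) - 1)

/-- A perversity on a filtered space : a function on strata (here, defined on all
subsets) vanishing on regular strata. -/
def IsPerversity (F : FilteredSpace X) (p : Set X → ℤ) : Prop :=
  ∀ S, F.IsRegularStratum S → p S = 0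

/-- The top perversity `t̄ (S) = codim S - 2`. -/
def topPerv (F : FilteredSpace X) : Set X → ℤ := fun S => F.codim S - 2

open Classical in
/-- The dual perversity `D p̄ = t̄ - p̄` (vanishing on regular strata). -/
def dualPerv (F : FilteredSpace X) (p : Set X → ℤ) : Set X → ℤ :=
  fun S => if F.IsRegularStratum S then 0 else F.codim S - 2 - p S

/-- A stratified map between filtered spaces: each stratum of the source is sent into
a stratum of the target of smaller or equal codimension. -/
def IsStratifiedMap (F : FilteredSpace X) (F' : FilteredSpace Y) (f : X → Y) : Prop :=
  Continuous f ∧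
    ∀ S, F.IsStratum S → ∃ T, F'.IsStratum T ∧ f '' S ⊆ T ∧ F'.codim T ≤ F.codim S

end FilteredSpace

/-! ## Topological simplices, filtered simplices -/

/-- The standard topological `m`-simplex. -/
abbrev TSimp (m : ℕ) : Set (Fin (m+1) → ℝ) := stdSimplex ℝ (Fin (m+1))

/-- The number of nonzero barycentric coordinates of a point of the `m`-simplex;
`t` belongs to the `d`-skeleton iff `suppCard t ≤ d + 1`. -/
def suppCard {m : ℕ} (t : TSimp m) : ℕ :=
  @Finset.card _ (@Finset.filter _ (fun j => (t : Fin (m+1) → ℝ) j ≠ 0)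
    (Classical.decPred _) Finset.univ)

/-- The `j`-th face embedding of standard simplices. -/
def faceMap (m : ℕ) (j : Fin (m+2)) : C(TSimp m, TSimp (m+1)) where
  toFun t := ⟨Fin.insertNth j 0 t.1, by
    refine ⟨fun k => ?_, ?_⟩
    · refine Fin.succAboveCases j ?_ ?_ k
      · rw [Fin.insertNth_apply_same]
      · intro l; rw [Fin.insertNth_apply_succAbove]; exact t.2.1 l
    · rw [Fin.sum_univ_succAbove _ j, Fin.insertNth_apply_same]
      simp only [Fin.insertNth_apply_succAbove]
      rw [zero_add]; exact t.2.2⟩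
  continuous_toFun := by
    apply Continuous.subtype_mk
    exact continuous_const.finInsertNth j continuous_subtype_val

/-- The `j`-th vertex of the standard `m`-simplex. -/
def vert (m : ℕ) (j : Fin (m+1)) : TSimp m :=
  ⟨fun i => if i = j then 1 else 0, by
    refine ⟨fun k => ?_, ?_⟩
    · dsimp only; split <;> norm_num
    · classical
      simp [Finset.sum_ite_eq']⟩


/-! ## Generic homology of constraint systems on chain groups -/

section generic

variable {C : ℕ → Type w} [∀ m, AddCommGroup (C m)]
variable {D : ℕ → Type v} [∀ m, AddCommGroup (D m)]

/-- Relative cycles: chains of `A` whose boundary lies in `B`. -/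
def relCycles (d : ∀ m, C m →+ C (m-1)) (A B : ∀ m, AddSubgroup (C m)) (m : ℕ) :
    AddSubgroup (C m) :=
  A m ⊓ (B (m-1)).comap (d m)

/-- Relative boundaries: boundaries of chains of `A`, together with chains of `B`. -/
def relBnds (d : ∀ m, C m →+ C (m-1)) (A B : ∀ m, AddSubgroup (C m)) (m : ℕ) :
    AddSubgroup (C m) :=
  (A (m+1)).map (d (m+1)) ⊔ B m

/-- Relative homology of the pair of constraint systems `(A, B)`. -/
abbrev relHomology (d : ∀ m, C m →+ C (m-1)) (A B : ∀ m, AddSubgroup (C m)) (m : ℕ) :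
    Type w :=
  relCycles d A B m ⧸
    ((relBnds d A B m ⊓ relCycles d A B m).addSubgroupOf (relCycles d A B m))

/-- The homology class of a relative cycle. -/
def hcl (d : ∀ m, C m →+ C (m-1)) (A B : ∀ m, AddSubgroup (C m)) {m : ℕ}
    (ξ : C m) (h : ξ ∈ relCycles d A B m) : relHomology d A B m :=
  QuotientAddGroup.mk (⟨ξ, h⟩ : relCycles d A B m)

/-- `f` induces an isomorphism in homology, compatibly with classes of cycles. -/
def InducesIso (d : ∀ m, C m →+ C (m-1)) (A B : ∀ m, AddSubgroup (C m))
    (d' : ∀ m, D m →+ D (m-1)) (A' B' : ∀ m, AddSubgroup (D m)) (m : ℕ)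
    (f : C m →+ D m) : Prop :=
  ∃ φ : relHomology d A B m ≃+ relHomology d' A' B' m,
    ∀ (ξ : C m) (h : ξ ∈ relCycles d A B m) (h' : f ξ ∈ relCycles d' A' B' m),
      φ (hcl d A B ξ h) = hcl d' A' B' (f ξ) h'

/-- The homomorphism induced in homology by an inclusion of constraint systems. -/
def inclInduced (d : ∀ m, C m →+ C (m-1)) (A B A' B' : ∀ m, AddSubgroup (C m))
    (hA : ∀ m, A m ≤ A' m) (hB : ∀ m, B m ≤ B' m) (m : ℕ) :
    relHomology d A B m →+ relHomology d A' B' m := by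
  have hZ : relCycles d A B m ≤ relCycles d A' B' m := by
    rintro ξ ⟨h1, h2⟩
    exact ⟨hA _ h1, hB _ h2⟩
  refine QuotientAddGroup.map _ _ (AddSubgroup.inclusion hZ) ?_
  intro x hx
  rw [AddSubgroup.mem_addSubgroupOf] at hx
  rw [AddSubgroup.mem_comap, AddSubgroup.mem_addSubgroupOf, AddSubgroup.coe_inclusion]
  refine ⟨?_, hZ x.2⟩
  exact (sup_le_sup (AddSubgroup.map_mono (hA _)) (hB _) : _ ≤ relBnds d A' B' m) hx.1

end generic

/-! ## Filtered simplices and their chain complexes -/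

/-- A simplex of `X` together with a block assignment of its vertices:
a candidate filtered simplex, the blocks recording the join decomposition
`Δ = Δ_0 ∗ ⋯ ∗ Δ_n`. -/
structure PreSimplex (X : Type u) [TopologicalSpace X] (m : ℕ) : Type u where
  map : C(TSimp m, X)
  block : Fin (m+1) → ℤ

variable {X : Type u} {Y : Type v} [TopologicalSpace X] [TopologicalSpace Y]

/-- The `j`-th face of a pre-simplex. -/
def PreSimplex.face {m : ℕ} (σ : PreSimplex X (m+1)) (j : Fin (m+2)) : PreSimplex X m :=
  ⟨σ.map.comp (faceMap m j), σ.block ∘ j.succAbove⟩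

/-- A generator system for chain complexes: generators and face operators. -/
structure SimpSystem : Type (u+1) where
  Gen : ℕ → Type u
  face : ∀ m : ℕ, Fin (m+2) → Gen (m+1) → Gen m

/-- The system of pre-filtered simplices of `X`. -/
abbrev filtSys (X : Type u) [TopologicalSpace X] : SimpSystem.{u} where
  Gen m := PreSimplex X m
  face _ j σ := σ.face j

/-- The system of all singular simplices of `X`. -/
abbrev singSys (X : Type u) [TopologicalSpace X] : SimpSystem.{u} where
  Gen m := C(TSimp m, X)
  face m j σ := σ.comp (faceMap m j)

namespace SimpSystem

variable (S : SimpSystem.{u}) (G : Type w) [AddCommGroup G]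

/-- Chains on the generators of `S`, with coefficients in `G`. -/
abbrev Chains (m : ℕ) : Type _ := S.Gen m →₀ G

/-- The boundary operator. -/
def bdry (m : ℕ) : S.Chains G (m+1) →+ S.Chains G m :=
  Finsupp.liftAddHom fun σ =>
    ∑ j : Fin (m+2), (-1 : ℤ) ^ (j : ℕ) • Finsupp.singleAddHom (S.face m j σ)

/-- The boundary operator, vanishing in degree `0`. -/
def bdryFrom : ∀ m : ℕ, S.Chains G m →+ S.Chains G (m-1)
  | 0 => 0
  | (m+1) => S.bdry G m

/-- The subgroup of chains all of whose simplices satisfy `P`. -/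
def suppIn {m : ℕ} (P : S.Gen m → Prop) : AddSubgroup (S.Chains G m) where
  carrier := {ξ | ∀ σ ∈ ξ.support, P σ}
  zero_mem' := by intro σ h; simp at h
  add_mem' := by
    classical
    intro a b ha hb σ h
    rcases Finset.mem_union.mp (Finsupp.support_add h) with h' | h'
    exacts [ha σ h', hb σ h']
  neg_mem' := by
    intro a ha σ h
    rw [Finsupp.support_neg] at h
    exact ha σ h

end SimpSystem

/-! ## Admissibility -/

/-- A singular simplex is `p`-admissible when, for every stratum `S`, the preimage
of `S` is contained in the skeleton of dimension `dim Δ - codim S + p S`. -/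
def MapAdmissible (F : FilteredSpace X) (p : Set X → ℤ) {m : ℕ} (τ : C(TSimp m, X)) : Prop :=
  ∀ S : Set X, F.IsStratum S → ∀ t : TSimp m, τ t ∈ S →
    (suppCard t : ℤ) ≤ (m : ℤ) - F.codim S + p S + 1

/-- A pre-simplex is a filtered simplex when its blocks are monotone and detect the
filtration: `σ⁻¹(X_i) = Δ_0 ∗ ⋯ ∗ Δ_i`. -/
def PreSimplex.IsFiltered (F : FilteredSpace X) {m : ℕ} (σ : PreSimplex X m) : Prop :=
  Monotone σ.block ∧
    ∀ i : ℤ, σ.map ⁻¹' (F.filt i) =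
      {t : TSimp m | ∀ j, (t : Fin (m+1) → ℝ) j ≠ 0 → σ.block j ≤ i}

/-- `p`-admissibility of a pre-simplex. -/
def PreSimplex.Admissible (F : FilteredSpace X) (p : Set X → ℤ) {m : ℕ}
    (σ : PreSimplex X m) : Prop :=
  MapAdmissible F p σ.map

/-- The allowable simplices of the `p`-intersection complex with support in the
region `W` : filtered, `p`-admissible, with image contained in `W`. -/
def Allowable (F : FilteredSpace X) (p : Set X → ℤ) (W : Set X) {m : ℕ}
    (σ : PreSimplex X m) : Prop :=
  σ.IsFiltered F ∧ σ.Admissible F p ∧ Set.range σ.map ⊆ W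

/-- The complex `C_*^{p̄}` of `p`-intersection chains (of filtered simplices),
with support in the region `W` : chains `ξ` such that every simplex of `ξ` and of
`∂ξ` is `p`-admissible (and carried by `W`). -/
def iChains (F : FilteredSpace X) (p : Set X → ℤ) (G : Type w) [AddCommGroup G]
    (W : Set X) (m : ℕ) : AddSubgroup ((filtSys X).Chains G m) :=
  (filtSys X).suppIn G (fun σ : PreSimplex X m => Allowable F p W σ) ⊓
    ((filtSys X).suppIn G (fun σ : PreSimplex X (m-1) => Allowable F p W σ)).comap
      ((filtSys X).bdryFrom G m)

/-- Intersection homology `H_*^{p̄}` of the part of `X` carried by the region `W`,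
relative to the region `W'` (absolute case: `W = univ`, `W' = ∅`). -/
abbrev iH (F : FilteredSpace X) (p : Set X → ℤ) (G : Type w) [AddCommGroup G]
    (W W' : Set X) (m : ℕ) : Type _ :=
  relHomology ((filtSys X).bdryFrom G) (fun k => iChains F p G W k)
    (fun k => iChains F p G W' k) m

/-- MacPherson's complex `I^{p̄}C_*` of singular intersection chains: all singular
simplices, `p̄`-admissibility as above. -/
def mChains (F : FilteredSpace X) (p : Set X → ℤ) (G : Type w) [AddCommGroup G]
    (m : ℕ) : AddSubgroup ((singSys X).Chains G m) :=
  (singSys X).suppIn G (fun τ : C(TSimp m, X) => MapAdmissible F p τ) ⊓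
    ((singSys X).suppIn G (fun τ : C(TSimp (m-1), X) => MapAdmissible F p τ)).comap
      ((singSys X).bdryFrom G m)

/-- The subcomplex of singular chains carried by `W`. -/
def sChains (X : Type u) [TopologicalSpace X] (G : Type w) [AddCommGroup G]
    (W : Set X) (m : ℕ) : AddSubgroup ((singSys X).Chains G m) :=
  (singSys X).suppIn G (fun τ : C(TSimp m, X) => Set.range τ ⊆ W)

/-- Singular homology of the pair of regions `(W, W')` of `X`. -/
abbrev sH (X : Type u) [TopologicalSpace X] (G : Type w) [AddCommGroup G]
    (W W' : Set X) (m : ℕ) : Type _ :=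
  relHomology ((singSys X).bdryFrom G) (fun k => sChains X G W k)
    (fun k => sChains X G W' k) m

/-! ## Pushforwards -/

/-- The canonical block assignment of a singular simplex of a filtered space:
the vertex `j` is assigned the lowest filtration level containing its image. -/
def canonicalBlock (F : FilteredSpace Y) {m : ℕ} (τ : C(TSimp m, Y)) : Fin (m+1) → ℤ :=
  fun j => sInf {i : ℤ | τ (vert m j) ∈ F.filt i}

/-- Pushforward of a pre-simplex along a continuous map, with the canonical blocks
of the target filtration. -/
def pushSimp (F' : FilteredSpace Y) (g : C(X, Y)) {m : ℕ} (σ : PreSimplex X m) :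
    PreSimplex Y m :=
  ⟨g.comp σ.map, canonicalBlock F' (g.comp σ.map)⟩

/-- Pushforward of chains along a continuous map (`σ ↦ f ∘ σ`). -/
def pushChain (F' : FilteredSpace Y) (g : C(X, Y)) (G : Type w) [AddCommGroup G]
    (m : ℕ) : (filtSys X).Chains G m →+ (filtSys Y).Chains G m :=
  Finsupp.mapDomain.addMonoidHom (pushSimp F' g)

/-- Forget the blocks: from filtered chains to singular chains. -/
def forgetChain (X : Type u) [TopologicalSpace X] (G : Type w) [AddCommGroup G]
    (m : ℕ) : (filtSys X).Chains G m →+ (singSys X).Chains G m :=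
  Finsupp.mapDomain.addMonoidHom (fun σ : PreSimplex X m => σ.map)

/-- Equip singular chains with canonical blocks. -/
def withBlocks (F : FilteredSpace X) (G : Type w) [AddCommGroup G] (m : ℕ) :
    (singSys X).Chains G m →+ (filtSys X).Chains G m :=
  Finsupp.mapDomain.addMonoidHom
    (fun τ : C(TSimp m, X) => (⟨τ, canonicalBlock F τ⟩ : PreSimplex X m))

/-! ## Tame (modered) intersection chains -/

/-- A pre-simplex is regular when its last join factor `Δ_n` is nonempty,
i.e. some vertex has block equal to the formal dimension of the space. -/
def PreSimplex.RegularS (F : FilteredSpace X) {m : ℕ} (σ : PreSimplex X m) : Prop :=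
  ∃ j, σ.block j = (F.dim : ℤ)

/-- The subgroup of chains carried by the singular set (all simplices singular). -/
def tSub (F : FilteredSpace X) (G : Type w) [AddCommGroup G] (m : ℕ) :
    AddSubgroup ((filtSys X).Chains G m) :=
  (filtSys X).suppIn G (fun σ : PreSimplex X m => ¬ σ.RegularS F)

/-- The quotient complex `𝔠_* = C_*(X)/C_*(Σ)`. -/
abbrev tChains (F : FilteredSpace X) (G : Type w) [AddCommGroup G] (m : ℕ) : Type _ :=
  (filtSys X).Chains G m ⧸ tSub F G m

/-- The projection onto the tame quotient. -/
def tProj (F : FilteredSpace X) (G : Type w) [AddCommGroup G] (m : ℕ) :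
    (filtSys X).Chains G m →+ tChains F G m :=
  QuotientAddGroup.mk' (tSub F G m)

open Classical in
/-- The regular part `∂_reg` of the boundary: only regular faces are kept. -/
def bdryReg (F : FilteredSpace X) (G : Type w) [AddCommGroup G] (m : ℕ) :
    (filtSys X).Chains G (m+1) →+ (filtSys X).Chains G m :=
  Finsupp.liftAddHom fun σ =>
    ∑ j : Fin (m+2), (-1 : ℤ) ^ (j : ℕ) •
      (if (σ.face j).RegularS F then Finsupp.singleAddHom (σ.face j) else 0)

/-- `∂_reg`, vanishing in degree 0. -/
def bdryRegFrom (F : FilteredSpace X) (G : Type w) [AddCommGroup G] :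
    ∀ m : ℕ, (filtSys X).Chains G m →+ (filtSys X).Chains G (m-1)
  | 0 => 0
  | (m+1) => bdryReg F G m

lemma bdryRegFrom_eq_zero (F : FilteredSpace X) (G : Type w) [AddCommGroup G] (m : ℕ)
    (ξ : (filtSys X).Chains G m) (hξ : ξ ∈ tSub F G m) :
    bdryRegFrom F G m ξ = 0 := by
  classical
  cases m with
  | zero => rfl
  | succ m =>
    show bdryReg F G m ξ = 0
    rw [bdryReg, Finsupp.liftAddHom_apply, Finsupp.sum]
    apply Finset.sum_eq_zero
    intro σ hσ
    have hns : ¬ σ.RegularS F := hξ σ hσ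
    have hface : ∀ j : Fin (m+2), ¬ (σ.face j).RegularS F := by
      intro j hj
      obtain ⟨k, hk⟩ := hj
      exact hns ⟨j.succAbove k, hk⟩
    have hzero : (∑ j : Fin (m+2), (-1 : ℤ) ^ (j : ℕ) •
        (if (σ.face j).RegularS F then Finsupp.singleAddHom (σ.face j) else 0) :
        G →+ (filtSys X).Chains G m) = 0 := by
      apply Finset.sum_eq_zero
      intro j _
      rw [if_neg (hface j), smul_zero]
    rw [hzero]
    rfl

/-- The differential `𝔡` induced by `∂_reg` on the tame quotient. -/
def tBdryFrom (F : FilteredSpace X) (G : Type w) [AddCommGroup G] (m : ℕ) :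
    tChains F G m →+ tChains F G (m-1) :=
  QuotientAddGroup.map _ _ (bdryRegFrom F G m)
    (by
      intro ξ hξ
      rw [AddSubgroup.mem_comap, bdryRegFrom_eq_zero F G m ξ hξ]
      exact zero_mem _)

/-- The classes of `p`-admissible chains in the tame quotient. -/
def tAdm (F : FilteredSpace X) (p : Set X → ℤ) (G : Type w) [AddCommGroup G] (m : ℕ) :
    AddSubgroup (tChains F G m) :=
  ((filtSys X).suppIn G
      (fun σ : PreSimplex X m => σ.IsFiltered F ∧ σ.Admissible F p)).map (tProj F G m)

/-- The tame `p`-intersection complex `𝔠_*^{p̄}` : classes of admissible chains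
whose `𝔡`-boundary is again (the class of) an admissible chain. -/
def tIC (F : FilteredSpace X) (p : Set X → ℤ) (G : Type w) [AddCommGroup G] (m : ℕ) :
    AddSubgroup (tChains F G m) :=
  tAdm F p G m ⊓ (tAdm F p G (m-1)).comap (tBdryFrom F G m)

/-- Tame intersection homology `𝔥_*^{p̄}(X; G)`. -/
abbrev tH (F : FilteredSpace X) (p : Set X → ℤ) (G : Type w) [AddCommGroup G] (m : ℕ) :
    Type _ :=
  relHomology (tBdryFrom F G) (fun k => tIC F p G k) (fun _ => ⊥) m

/-! ## Products with a factor -/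

/-- The product filtration on `M × X` : `(M × X)_i = M × X_i`. -/
def FilteredSpace.prodLeft (M : Type v) [TopologicalSpace M] [Nonempty M]
    (F : FilteredSpace X) : FilteredSpace (M × X) where
  dim := F.dim
  filt i := univ ×ˢ F.filt i
  filt_neg i h := by (try dsimp only); rw [F.filt_neg i h, Set.prod_empty]
  filt_mono := fun i j h => Set.prod_mono (le_refl _) (F.filt_mono h)
  filt_closed i := isClosed_univ.prod (F.filt_closed i)
  filt_top i h := by (try dsimp only); rw [F.filt_top i h, Set.univ_prod_univ]
  reg_nonempty := by
    obtain ⟨x, hx1, hx2⟩ := F.reg_nonempty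
    exact ⟨(Classical.arbitrary M, x), ⟨trivial, hx1⟩, fun h => hx2 h.2⟩

/-- The product filtration on `X × M` : `(X × M)_i = X_i × M`. -/
def FilteredSpace.prodRight (M : Type v) [TopologicalSpace M] [Nonempty M]
    (F : FilteredSpace X) : FilteredSpace (X × M) where
  dim := F.dim
  filt i := F.filt i ×ˢ univ
  filt_neg i h := by (try dsimp only); rw [F.filt_neg i h, Set.empty_prod]
  filt_mono := fun i j h => Set.prod_mono (F.filt_mono h) (le_refl _)
  filt_closed i := (F.filt_closed i).prod isClosed_univ
  filt_top i h := by (try dsimp only); rw [F.filt_top i h, Set.univ_prod_univ]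
  reg_nonempty := by
    obtain ⟨x, hx1, hx2⟩ := F.reg_nonempty
    exact ⟨(x, Classical.arbitrary M), ⟨hx1, trivial⟩, fun h => hx2 h.1⟩

/-- The perversity induced on `M × X` by a perversity on `X`
(a stratum `M × S` is sent to the value on `S`). -/
def pervProdLeft (p : Set X → ℤ) : Set (M' × X) → ℤ := fun T => p (Prod.snd '' T)

/-- The perversity induced on `X × M` by a perversity on `X`. -/
def pervProdRight (p : Set X → ℤ) : Set (X × M') → ℤ := fun T => p (Prod.fst '' T)

/-! ## The open cone -/

/-- The relation collapsing `L × {0}` in `L × [0,1)`. -/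
def coneSetoid (L : Type u) [TopologicalSpace L] :
    Setoid (L × {t : ℝ // 0 ≤ t ∧ t < 1}) where
  r a b := a = b ∨ (a.2.1 = 0 ∧ b.2.1 = 0)
  iseqv := by
    refine ⟨fun a => Or.inl rfl, ?_, ?_⟩
    · rintro a b (rfl | h)
      exacts [Or.inl rfl, Or.inr ⟨h.2, h.1⟩]
    · rintro a b c (rfl | h) (rfl | h')
      exacts [Or.inl rfl, Or.inr h', Or.inr h, Or.inr ⟨h.1, h'.2⟩]

/-- The open cone `c̊L = L × [0,1) / (L × {0})`. -/
abbrev OpenCone (L : Type u) [TopologicalSpace L] : Type u := Quotient (coneSetoid L)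

/-- The point `[x, t]` of the open cone. -/
def conePt {L : Type u} [TopologicalSpace L] (x : L) (t : {t : ℝ // 0 ≤ t ∧ t < 1}) :
    OpenCone L :=
  Quotient.mk (coneSetoid L) (x, t)

/-- The parameter `0` of the cone. -/
def czero : {t : ℝ // 0 ≤ t ∧ t < 1} := ⟨0, le_refl 0, zero_lt_one⟩

/-- The vertex `𝓌` of the open cone on a (nonempty) filtered space. -/
def coneVertexOf {L : Type u} [TopologicalSpace L] (FL : FilteredSpace L) : OpenCone L :=
  conePt FL.reg_nonempty.choose czero

/-- The cone `c̊A ⊆ c̊L` on a subset `A ⊆ L` (it contains the vertex; `c̊∅ = {𝓌}`). -/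
def coneSet {L : Type u} [TopologicalSpace L] (A : Set L) : Set (OpenCone L) :=
  {z | ∃ x t, z = conePt x t ∧ (t.1 = 0 ∨ x ∈ A)}

lemma coneSet_mono {L : Type u} [TopologicalSpace L] {A B : Set L} (h : A ⊆ B) :
    coneSet A ⊆ coneSet B := by
  rintro z ⟨x, t, rfl, h0 | hA⟩
  exacts [⟨x, t, rfl, Or.inl h0⟩, ⟨x, t, rfl, Or.inr (h hA)⟩]

lemma preimage_coneSet {L : Type u} [TopologicalSpace L] (A : Set L) :
    (Quotient.mk (coneSetoid L)) ⁻¹' (coneSet A) =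
      {a : L × {t : ℝ // 0 ≤ t ∧ t < 1} | a.2.1 = 0 ∨ a.1 ∈ A} := by
  ext ⟨x, t⟩
  constructor
  · rintro ⟨x', t', he, ht'⟩
    have hrel := Quotient.exact he
    rcases hrel with h | h
    · cases h
      exact ht'
    · exact Or.inl h.1
  · intro h
    exact ⟨x, t, rfl, h⟩

/-- The conical filtration on the open cone : `(c̊L)_i = c̊(L_{i-1})`. -/
def coneFiltered {L : Type u} [TopologicalSpace L] (FL : FilteredSpace L) :
    FilteredSpace (OpenCone L) where
  dim := FL.dim + 1
  filt i := if i < 0 then ∅ else coneSet (FL.filt (i-1))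
  filt_neg i h := by (try dsimp only); rw [if_pos h]
  filt_mono := by
    intro i j hij
    dsimp only
    by_cases hi : i < 0
    · rw [if_pos hi]; exact empty_subset _
    · rw [if_neg hi, if_neg (by omega)]
      exact coneSet_mono (FL.filt_mono (by omega))
  filt_closed i := by
    try dsimp only
    by_cases hi : i < 0
    · rw [if_pos hi]; exact isClosed_empty
    · rw [if_neg hi]
      rw [← isQuotientMap_quotient_mk'.isClosed_preimage]
      show IsClosed ((Quotient.mk (coneSetoid L)) ⁻¹' (coneSet (FL.filt (i-1))))
      rw [preimage_coneSet]
      have he : {a : L × {t : ℝ // 0 ≤ t ∧ t < 1} | a.2.1 = 0 ∨ a.1 ∈ FL.filt (i-1)} =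
          (univ ×ˢ {t : {t : ℝ // 0 ≤ t ∧ t < 1} | t.1 = 0}) ∪ (FL.filt (i-1) ×ˢ univ) := by
        ext ⟨x, t⟩
        simp only [Set.mem_setOf_eq, Set.mem_union, Set.mem_prod, Set.mem_univ, true_and,
          and_true]
      rw [he]
      refine IsClosed.union (isClosed_univ.prod ?_) ((FL.filt_closed _).prod isClosed_univ)
      have he2 : {t : {t : ℝ // 0 ≤ t ∧ t < 1} | t.1 = 0} =
          (Subtype.val : {t : ℝ // 0 ≤ t ∧ t < 1} → ℝ) ⁻¹' {0} := by rfl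
      rw [he2]
      exact isClosed_singleton.preimage continuous_subtype_val
  filt_top i h := by
    try dsimp only
    have h' : (0 : ℤ) ≤ i := by
      refine le_trans ?_ h
      positivity
    rw [if_neg (by omega)]
    rw [FL.filt_top (i-1) (by push_cast at h ⊢; omega)]
    apply Set.eq_univ_of_forall
    intro z
    obtain ⟨⟨x, t⟩, rfl⟩ := Quotient.exists_rep z
    exact ⟨x, t, rfl, Or.inr trivial⟩
  reg_nonempty := by
    try dsimp only
    obtain ⟨x, hx1, hx2⟩ := FL.reg_nonempty
    have hd1 : ((FL.dim + 1 : ℕ) : ℤ) - 1 = (FL.dim : ℤ) := by push_cast; ring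
    refine ⟨conePt x ⟨1/2, by norm_num, by norm_num⟩, ?_, ?_⟩
    · rw [if_neg (by push_cast; omega)]
      refine ⟨x, _, rfl, Or.inr ?_⟩
      rw [hd1]
      exact hx1
    · rw [if_neg (by push_cast; omega)]
      rintro ⟨x', t', he, hp⟩
      have hrel := Quotient.exact he
      rcases hrel with hq | hq
      · rcases hp with h0 | hA
        · rw [← congrArg (fun a => (Prod.snd a).1) hq] at h0
          norm_num at h0
        · apply hx2
          have hx' : x' = x := (congrArg Prod.fst hq).symm
          rw [hx'] at hA
          have hd2 : ((FL.dim + 1 : ℕ) : ℤ) - 1 - 1 = (FL.dim : ℤ) - 1 := by push_cast; ring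
          rw [hd2] at hA
          exact hA
      · norm_num at hq

/-- The perversity induced on `L` by a perversity on the cone `c̊L` :
`p̄(S) = p̄(S × ]0,1[)`. -/
def pervConeSlice {L : Type u} [TopologicalSpace L] (p : Set (OpenCone L) → ℤ) :
    Set L → ℤ :=
  fun S => p {z | ∃ x t, z = conePt x t ∧ x ∈ S ∧ t.1 ≠ 0}

/-! ## The intrinsic filtration -/

/-- Two points of a space are equivalent when some pointed neighbourhoods are
homeomorphic. -/
def PtEquiv (X : Type u) [TopologicalSpace X] (x y : X) : Prop :=
  ∃ (U V : Set X) (hU : IsOpen U) (hV : IsOpen V) (hx : x ∈ U) (hy : y ∈ V)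
    (h : U ≃ₜ V), h ⟨x, hx⟩ = ⟨y, hy⟩

lemma PtEquiv.refl (X : Type u) [TopologicalSpace X] (x : X) : PtEquiv X x x :=
  ⟨univ, univ, isOpen_univ, isOpen_univ, trivial, trivial, Homeomorph.refl _, rfl⟩

/-- The filtration of the intrinsic CS-set `X^*`: `X^*_i` is the union of the
equivalence classes contained in `X_i` (equivalently, formed of strata of
dimension at most `i`). -/
def intrinsicFilt {X : Type u} [TopologicalSpace X] (F : FilteredSpace X) (i : ℤ) :
    Set X :=
  {x | ∀ y, PtEquiv X x y → y ∈ F.filt i}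

/-- The intrinsic filtered space `X^*` associated with a filtered space. -/
def intrinsic {X : Type u} [TopologicalSpace X] (F : FilteredSpace X) :
    FilteredSpace X where
  dim := F.dim
  filt := intrinsicFilt F
  filt_neg i h := by
    rw [Set.eq_empty_iff_forall_notMem]
    intro x hx
    have := hx x (PtEquiv.refl X x)
    rw [F.filt_neg i h] at this
    exact this
  filt_mono := fun i j hij x hx y hy => F.filt_mono hij (hx y hy)
  filt_closed i := by
    rw [← isOpen_compl_iff, isOpen_iff_forall_mem_open]
    intro x hx
    rw [Set.mem_compl_iff, intrinsicFilt, Set.mem_setOf_eq, not_forall] at hx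
    obtain ⟨y, hy⟩ := hx
    rw [_root_.not_imp] at hy
    obtain ⟨⟨U, V, hU, hV, hxU, hyV, h, hhx⟩, hyF⟩ := hy
    refine ⟨Subtype.val '' (⇑h ⁻¹' (Subtype.val ⁻¹' (F.filt i)ᶜ)), ?_, ?_, ?_⟩
    · rintro _ ⟨u, hu, rfl⟩
      intro hcon
      exact hu (hcon (h u).1 ⟨U, V, hU, hV, u.2, (h u).2, h, rfl⟩)
    · exact hU.isOpenMap_subtype_val _
        ((h.continuous.isOpen_preimage _) (continuous_subtype_val.isOpen_preimage _
          (F.filt_closed i).isOpen_compl))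
    · refine ⟨⟨x, hxU⟩, ?_, rfl⟩
      show (h ⟨x, hxU⟩ : X) ∉ F.filt i
      rw [hhx]
      exact hyF
  filt_top i h := by
    apply Set.eq_univ_of_forall
    intro x y hy
    rw [F.filt_top i h]
    trivial
  reg_nonempty := by
    obtain ⟨x, hx1, hx2⟩ := F.reg_nonempty
    refine ⟨x, ?_, ?_⟩
    · intro y hy
      rw [F.filt_top _ (le_refl _)]
      trivial
    · intro hcon
      exact hx2 (hcon x (PtEquiv.refl X x))

/-- A stratum `S` of `X` is a source of a stratum `T` of `X^*` when `ν(S) ⊆ T`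
and `dim S = dim T`. -/
def IsSource {X : Type u} [TopologicalSpace X] (F : FilteredSpace X) (S T : Set X) :
    Prop :=
  F.IsStratum S ∧ (intrinsic F).IsStratum T ∧ S ⊆ T ∧
    F.stratumDim S = (intrinsic F).stratumDim T

/-- Equivalence of strata: some point of one is equivalent to some point of the
other. -/
def StrataEquiv (X : Type u) [TopologicalSpace X] (S S' : Set X) : Prop :=
  ∃ x ∈ S, ∃ y ∈ S', PtEquiv X x y

/-- `K`-perversity. -/
def IsKPerversity {X : Type u} [TopologicalSpace X] (F : FilteredSpace X)
    (p : Set X → ℤ) : Prop :=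
  F.IsPerversity p ∧
  (∀ S S' T, IsSource F S T → IsSource F S' T → p S = p S') ∧
  (∀ S R, F.IsStratum S → F.IsRegularStratum R → StrataEquiv X S R → 0 ≤ p S) ∧
  (∀ S S' T, F.IsStratum S → IsSource F S' T → F.IsSingularStratum S' →
    S ⊆ closure S' → StrataEquiv X S S' →
      p S ≤ p S' ∧ F.dualPerv p S' ≤ F.dualPerv p S)

open Classical in
/-- The perversity `ν_* p̄` induced on `X^*` by a perversity on `X` :
its value on a stratum `T` of `X^*` is the value of `p̄` on any source of `T`. -/
def pushPerv {X : Type u} [TopologicalSpace X] (F : FilteredSpace X) (p : Set X → ℤ) :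
    Set X → ℤ :=
  fun T => if h : ∃ S, IsSource F S T then p h.choose else 0

open Classical in
/-- The pullback perversity `f^* q̄` of a perversity along a stratified map:
`(f^* q̄)(S) = q̄(S^f)`. -/
def pullPerv {X : Type u} {Y : Type v} [TopologicalSpace X] [TopologicalSpace Y]
    (F : FilteredSpace X) (F' : FilteredSpace Y) (f : X → Y) (q : Set Y → ℤ) :
    Set X → ℤ :=
  fun S => if h : ∃ T, F'.IsStratum T ∧ f '' S ⊆ T then q h.choose else 0

/-- The intrinsic aggregation `ν : X → X^*` (the identity map), as a pushforward of
filtered chains: blocks are recomputed with respect to the intrinsic filtration. -/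
def nuChain {X : Type u} [TopologicalSpace X] (F : FilteredSpace X) (G : Type w)
    [AddCommGroup G] (m : ℕ) :
    (filtSys X).Chains G m →+ (filtSys X).Chains G m :=
  pushChain (intrinsic F) (ContinuousMap.id X) G m

/-! ## CS sets -/

/-- A CS-set: each `X_i ∖ X_{i-1}` is a topological `i`-manifold (possibly empty)
and points of `X_i ∖ X_{i-1}`, `i ≠ n`, have conical charts `U × c̊L ≅ V` with `L`
a compact (Hausdorff) filtered space of formal dimension `n - i - 1`. -/
def IsCSSet {X : Type u} [TopologicalSpace X] (F : FilteredSpace X) : Prop :=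
  (∀ i : ℕ, ∀ x, ∀ hx : x ∈ F.filt i \ F.filt ((i : ℤ) - 1),
      ∃ V : Set ↥(F.filt i \ F.filt ((i : ℤ) - 1)), IsOpen V ∧ ⟨x, hx⟩ ∈ V ∧
        Nonempty (↥V ≃ₜ (Fin i → ℝ))) ∧
  (∀ i : ℕ, i < F.dim → ∀ x ∈ F.filt i \ F.filt ((i : ℤ) - 1),
    ∃ V : Set X, IsOpen V ∧ x ∈ V ∧
    ∃ U : Set X, x ∈ U ∧ U ⊆ F.filt i \ F.filt ((i : ℤ) - 1) ∧
      IsOpen (Subtype.val ⁻¹' U : Set ↥(F.filt i \ F.filt ((i : ℤ) - 1))) ∧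
    ∃ (L : Type u) (_ : TopologicalSpace L) (_ : T2Space L) (_ : CompactSpace L)
      (FL : FilteredSpace L), (FL.dim : ℤ) = (F.dim : ℤ) - i - 1 ∧
    ∃ φ : (↥U × OpenCone L) ≃ₜ ↥V,
      (∀ u : ↥U, ((φ (u, coneVertexOf FL) : ↥V) : X) = (u : X)) ∧
      (∀ j : ℤ, 0 ≤ j → j ≤ (F.dim : ℤ) - i - 1 →
        Subtype.val '' (⇑φ '' (univ ×ˢ coneSet (FL.filt j))) = V ∩ F.filt (i + j + 1)))

/-- A normal CS-set: one admitting conical charts with connected links. -/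
def IsNormalCSSet {X : Type u} [TopologicalSpace X] (F : FilteredSpace X) : Prop :=
  (∀ i : ℕ, ∀ x, ∀ hx : x ∈ F.filt i \ F.filt ((i : ℤ) - 1),
      ∃ V : Set ↥(F.filt i \ F.filt ((i : ℤ) - 1)), IsOpen V ∧ ⟨x, hx⟩ ∈ V ∧
        Nonempty (↥V ≃ₜ (Fin i → ℝ))) ∧
  (∀ i : ℕ, i < F.dim → ∀ x ∈ F.filt i \ F.filt ((i : ℤ) - 1),
    ∃ V : Set X, IsOpen V ∧ x ∈ V ∧
    ∃ U : Set X, x ∈ U ∧ U ⊆ F.filt i \ F.filt ((i : ℤ) - 1) ∧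
      IsOpen (Subtype.val ⁻¹' U : Set ↥(F.filt i \ F.filt ((i : ℤ) - 1))) ∧
    ∃ (L : Type u) (_ : TopologicalSpace L) (_ : T2Space L) (_ : CompactSpace L)
      (_ : ConnectedSpace L) (FL : FilteredSpace L),
      (FL.dim : ℤ) = (F.dim : ℤ) - i - 1 ∧
    ∃ φ : (↥U × OpenCone L) ≃ₜ ↥V,
      (∀ u : ↥U, ((φ (u, coneVertexOf FL) : ↥V) : X) = (u : X)) ∧
      (∀ j : ℤ, 0 ≤ j → j ≤ (F.dim : ℤ) - i - 1 →
        Subtype.val '' (⇑φ '' (univ ×ˢ coneSet (FL.filt j))) = V ∩ F.filt (i + j + 1)))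

/-! ## Miscellaneous helpers -/

lemma SimpSystem.suppIn_mono (S : SimpSystem.{u}) (G : Type w) [AddCommGroup G] {m : ℕ}
    {P Q : S.Gen m → Prop} (h : ∀ σ, P σ → Q σ) : S.suppIn G P ≤ S.suppIn G Q :=
  fun ξ hξ σ hσ => h σ (hξ σ hσ)

lemma iChains_mono (F : FilteredSpace X) (p : Set X → ℤ) (G : Type w) [AddCommGroup G]
    {W W' : Set X} (h : W ⊆ W') (m : ℕ) :
    iChains F p G W m ≤ iChains F p G W' m := by
  apply inf_le_inf
  · exact (filtSys X).suppIn_mono G (fun σ hσ => ⟨hσ.1, hσ.2.1, hσ.2.2.trans h⟩)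
  · exact AddSubgroup.comap_mono
      ((filtSys X).suppIn_mono G (fun σ hσ => ⟨hσ.1, hσ.2.1, hσ.2.2.trans h⟩))

/-- The inclusion `x ↦ [x, t]` of `L` into the open cone. -/
def coneIncl {L : Type u} [TopologicalSpace L] (t : ℝ) (h0 : 0 ≤ t) (h1 : t < 1) :
    C(L, OpenCone L) where
  toFun x := conePt x ⟨t, h0, h1⟩
  continuous_toFun := by
    apply Continuous.comp
    · exact continuous_quotient_mk'
    · exact continuous_id.prodMk continuous_const

/-- The unit sphere `S^ℓ ⊆ ℝ^{ℓ+1}`. -/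
abbrev Sph (l : ℕ) : Set (EuclideanSpace ℝ (Fin (l+1))) := Metric.sphere 0 1

instance (l : ℕ) : Nonempty (Sph l) :=
  (NormedSpace.sphere_nonempty.mpr zero_le_one).to_subtype

/-- `p̄`-homogeneity: every singular stratum equivalent to a regular stratum has
`p̄(S) ≤ t̄(S)`. -/
def PHomogeneous {X : Type u} [TopologicalSpace X] (F : FilteredSpace X)
    (p : Set X → ℤ) : Prop :=
  ∀ S R, F.IsSingularStratum S → F.IsRegularStratum R → StrataEquiv X S R →
    p S ≤ F.codim S - 2

/-! ## Stratified spaces, more perversities, absolute homology -/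

/-- A stratified space: a filtered space in which the frontier condition holds for
strata: `S ∩ cl S' ≠ ∅` implies `S ⊆ cl S'`. -/
def FilteredSpace.IsStratifiedSpace {X : Type u} [TopologicalSpace X]
    (F : FilteredSpace X) : Prop :=
  ∀ S S', F.IsStratum S → F.IsStratum S' → (S ∩ closure S').Nonempty → S ⊆ closure S'

open Classical in
/-- The maximal (top) perversity `t̄` : `t̄(S) = codim S - 2` on singular strata. -/
def tPerv {X : Type u} [TopologicalSpace X] (F : FilteredSpace X) : Set X → ℤ :=
  fun S => if F.IsRegularStratum S then 0 else F.codim S - 2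

/-- Absolute `p̄`-intersection homology of the region `W` of `X`. -/
abbrev iHa {X : Type u} [TopologicalSpace X] (F : FilteredSpace X) (p : Set X → ℤ)
    (G : Type w) [AddCommGroup G] (W : Set X) (m : ℕ) : Type _ :=
  relHomology ((filtSys X).bdryFrom G) (fun k => iChains F p G W k) (fun _ => ⊥) m

/-- Absolute singular homology of the region `W` of `X`. -/
abbrev sHa (X : Type u) [TopologicalSpace X] (G : Type w) [AddCommGroup G]
    (W : Set X) (m : ℕ) : Type _ :=
  relHomology ((singSys X).bdryFrom G) (fun k => sChains X G W k) (fun _ => ⊥) m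

/-- MacPherson's singular intersection homology `I^{p̄}H_*`. -/
abbrev mH {X : Type u} [TopologicalSpace X] (F : FilteredSpace X) (p : Set X → ℤ)
    (G : Type w) [AddCommGroup G] (m : ℕ) : Type _ :=
  relHomology ((singSys X).bdryFrom G) (fun k => mChains F p G k) (fun _ => ⊥) m

/-! ## Fatal faces and the defect -/

/-- The vertex set of the smallest face `F_S` of `Δ` containing `σ⁻¹(S)`. -/
def vtx {X : Type u} [TopologicalSpace X] {m : ℕ} (σ : PreSimplex X m) (S : Set X) :
    Set (Fin (m+1)) :=
  {j | ∃ t : TSimp m, σ.map t ∈ S ∧ (t : Fin (m+1) → ℝ) j ≠ 0}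

/-- The candidates for the fatal face: proper faces `F_S` with
`dim F_S = dim Δ - codim S + p̄(S)`. -/
def fatalCands {X : Type u} [TopologicalSpace X] (F : FilteredSpace X) (p : Set X → ℤ)
    {m : ℕ} (σ : PreSimplex X m) : Set (Set (Fin (m+1))) :=
  {A | ∃ S, F.IsStratum S ∧ A = vtx σ S ∧ A ≠ univ ∧
    ((A.ncard : ℤ) = (m : ℤ) - F.codim S + p S + 1)}

/-- `A` is (the vertex set of) the `p̄`-fatal face of `σ`: the least candidate. -/
def IsFatalIdx {X : Type u} [TopologicalSpace X] (F : FilteredSpace X) (p : Set X → ℤ)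
    {m : ℕ} (σ : PreSimplex X m) (A : Set (Fin (m+1))) : Prop :=
  A ∈ fatalCands F p σ ∧ ∀ B ∈ fatalCands F p σ, A ⊆ B

/-- `S` is the `p̄`-guilty stratum of `σ` : `F_S` is the fatal face of `σ`. -/
def IsGuilty {X : Type u} [TopologicalSpace X] (F : FilteredSpace X) (p : Set X → ℤ)
    {m : ℕ} (σ : PreSimplex X m) (S : Set X) : Prop :=
  F.IsStratum S ∧ IsFatalIdx F p σ (vtx σ S) ∧
    (((vtx σ S).ncard : ℤ) = (m : ℤ) - F.codim S + p S + 1)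

/-- The `p̄`-defect `ℓ_{p̄}(σ)` : the codimension of the guilty stratum, `0` if `σ` is
of `p̄`-intersection. -/
def defect {X : Type u} [TopologicalSpace X] (F : FilteredSpace X) (p : Set X → ℤ)
    {m : ℕ} (σ : PreSimplex X m) : ℤ :=
  sSup ({0} ∪ {c | ∃ S, IsGuilty F p σ S ∧ c = F.codim S})

/-- The linear simplex with vertices `v j` (a linear self-map of the standard
simplex). -/
def linMap {m : ℕ} (v : Fin (m+1) → TSimp m) : C(TSimp m, TSimp m) where
  toFun t := ⟨fun i => ∑ j, (t : Fin (m+1) → ℝ) j * (v j : Fin (m+1) → ℝ) i, by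
    refine ⟨fun i => ?_, ?_⟩
    · exact Finset.sum_nonneg fun j _ => mul_nonneg (t.2.1 j) ((v j).2.1 i)
    · rw [Finset.sum_comm]
      have he : ∀ j : Fin (m+1),
          (∑ i, (t : Fin (m+1) → ℝ) j * (v j : Fin (m+1) → ℝ) i) = (t : Fin (m+1) → ℝ) j := by
        intro j
        rw [← Finset.mul_sum, show (∑ i, (v j : Fin (m+1) → ℝ) i) = 1 from (v j).2.2, mul_one]
      rw [Finset.sum_congr rfl (fun j _ => he j)]
      exact t.2.2⟩
  continuous_toFun := by
    apply Continuous.subtype_mk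
    apply continuous_pi
    intro i
    apply continuous_finset_sum
    intro j _
    exact ((continuous_apply j).comp continuous_subtype_val).mul continuous_const

/-! The pushforward `f ∘ σ` of a filtered simplex is given the canonical join decomposition in
which a vertex lies in the block of the filtration level of its image. The open face of `Δ`
through a point `t` is connected and `σ` maps it into a single stratum of `X`, which `f` sends
into a single stratum of `Y`; the vertices of that face lie in its closure, so their levels are
at most the level of `f (σ t)`, with equality at the vertices of highest block. Hence `f ∘ σ`
is filtered. Admissibility transfers because the stratum `T ∋ f (σ t)` contains the image of the
stratum `S ∋ σ t`, and `Dq̄ T ≤ Dp̄ S` together with `codim T ≤ codim S` gives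
`codim T - q̄ T ≤ codim S - p̄ S`. Finally, `σ ↦ f ∘ σ` commutes with faces, hence with `∂`. -/

namespace FilteredSpace

variable (F : FilteredSpace X) {x : X} {i : ℤ}

def level (x : X) : ℤ := sInf {i | x ∈ F.filt i}

theorem mem_filt_iff_level_le : x ∈ F.filt i ↔ F.level x ≤ i := by
  have hne : {i : ℤ | x ∈ F.filt i}.Nonempty :=
    ⟨F.dim, by rw [mem_ofPred_eq, F.filt_top _ le_rfl]; trivial⟩
  have hbdd : BddBelow {i : ℤ | x ∈ F.filt i} :=
    ⟨0, fun i hi => not_lt.1 fun h => by rwa [mem_ofPred_eq, F.filt_neg i h] at hi⟩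
  exact ⟨fun h => csInf_le hbdd h, fun h => F.filt_mono h (Int.csInf_mem hne hbdd)⟩

theorem mem_filt_diff_iff : x ∈ F.filt i \ F.filt (i - 1) ↔ F.level x = i := by
  simp only [mem_sdiff, mem_filt_iff_level_le]
  omega

theorem level_le_of_mem_closure {s : Set X} (hs : ∀ y ∈ s, F.level y ≤ i)
    (hx : x ∈ closure s) : F.level x ≤ i :=
  (F.mem_filt_iff_level_le).1 <|
    closure_minimal (fun y hy => (F.mem_filt_iff_level_le).2 (hs y hy)) (F.filt_closed i) hx

variable {F} {S S' : Set X} {j : ℤ}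

theorem IsStratumDim.level_eq (hS : F.IsStratumDim S i) (hx : x ∈ S) : F.level x = i := by
  obtain ⟨y, -, rfl⟩ := hS
  exact (F.mem_filt_diff_iff).1 (connectedComponentIn_subset _ _ hx)

theorem isStratumDim_connectedComponentIn (x : X) :
    F.IsStratumDim (connectedComponentIn (F.filt (F.level x) \ F.filt (F.level x - 1)) x)
      (F.level x) :=
  ⟨x, (F.mem_filt_diff_iff).2 rfl, rfl⟩

theorem mem_connectedComponentIn_level (x : X) :
    x ∈ connectedComponentIn (F.filt (F.level x) \ F.filt (F.level x - 1)) x :=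
  mem_connectedComponentIn ((F.mem_filt_diff_iff).2 rfl)

theorem IsStratumDim.eq_connectedComponentIn (hS : F.IsStratumDim S i) (hx : x ∈ S) :
    S = connectedComponentIn (F.filt i \ F.filt (i - 1)) x := by
  obtain ⟨y, -, rfl⟩ := hS
  exact connectedComponentIn_eq hx

theorem IsStratumDim.eq_of_mem (hS : F.IsStratumDim S i) (hS' : F.IsStratumDim S' j)
    (hxS : x ∈ S) (hxS' : x ∈ S') : S = S' := by
  obtain rfl : i = j := (hS.level_eq hxS).symm.trans (hS'.level_eq hxS')
  rw [hS.eq_connectedComponentIn hxS, hS'.eq_connectedComponentIn hxS']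

theorem IsStratumDim.subset_of_isPreconnected {P : Set X} (hS : F.IsStratumDim S i)
    (hx : x ∈ S) (hP : IsPreconnected P) (hxP : x ∈ P) (hlevel : ∀ y ∈ P, F.level y = i) :
    P ⊆ S :=
  hS.eq_connectedComponentIn hx ▸
    hP.subset_connectedComponentIn hxP fun y hy => (F.mem_filt_diff_iff).2 (hlevel y hy)

theorem IsStratumDim.nonempty (hS : F.IsStratumDim S i) : S.Nonempty := by
  obtain ⟨x, hx, rfl⟩ := hS
  exact ⟨x, mem_connectedComponentIn hx⟩

theorem IsStratumDim.unique (hS : F.IsStratumDim S i) (hS' : F.IsStratumDim S j) : i = j := by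
  obtain ⟨x, hx⟩ := hS.nonempty
  rw [← hS.level_eq hx, hS'.level_eq hx]

theorem IsStratumDim.codim_eq (hS : F.IsStratumDim S i) : F.codim S = F.dim - i := by
  have hex : ∃ j, F.IsStratumDim S j := ⟨i, hS⟩
  rw [codim, stratumDim, dif_pos hex, hex.choose_spec.unique hS]

variable {F' : FilteredSpace Y}

theorem IsStratumDim.le_dim (hS : F.IsStratumDim S i) : i ≤ F.dim := by
  obtain ⟨x, hx, -⟩ := hS
  by_contra h
  exact hx.2 (by rw [F.filt_top (i - 1) (by omega)]; trivial)

theorem IsRegularStratum.codim_eq_zero (hS : F.IsRegularStratum S) : F.codim S = 0 := by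
  rw [IsStratumDim.codim_eq hS, sub_self]

theorem codim_pos (hS : F.IsStratum S) (hreg : ¬F.IsRegularStratum S) : 0 < F.codim S := by
  obtain ⟨i, hi⟩ := hS
  have hne : i ≠ F.dim := fun h => hreg (by subst h; exact hi)
  have := hi.le_dim
  rw [hi.codim_eq]
  omega

theorem codim_sub_le_of_dualPerv_le {p : Set X → ℤ} {q : Set Y → ℤ} (hp : F.IsPerversity p)
    (hq : F'.IsPerversity q) {T : Set Y} (hT : F'.IsStratum T)
    (hcodim : F'.codim T ≤ F.codim S)
    (hD : F'.dualPerv q T ≤ F.dualPerv p S) : F'.codim T - q T ≤ F.codim S - p S := by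
  unfold dualPerv at hD
  by_cases hTreg : F'.IsRegularStratum T
  · rw [hTreg.codim_eq_zero, hq T hTreg]
    by_cases hSreg : F.IsRegularStratum S
    · rw [hSreg.codim_eq_zero, hp S hSreg]
    · rw [if_pos hTreg, if_neg hSreg] at hD
      omega
  · have := codim_pos hT hTreg
    by_cases hSreg : F.IsRegularStratum S
    · rw [hSreg.codim_eq_zero] at hcodim
      omega
    · rw [if_neg hTreg, if_neg hSreg] at hD
      omega

variable {f : X → Y}

theorem IsStratifiedMap.level_eq_of_isPreconnected (hf : IsStratifiedMap F F' f) {P : Set X}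
    (hP : IsPreconnected P) (hx : x ∈ P) (hlevel : ∀ y ∈ P, F.level y = F.level x) :
    ∀ y ∈ P, F'.level (f y) = F'.level (f x) := by
  have hS := F.isStratumDim_connectedComponentIn x
  obtain ⟨T, ⟨j, hT⟩, hfT, -⟩ := hf.2 _ ⟨_, hS⟩
  have hPS := hS.subset_of_isPreconnected (F.mem_connectedComponentIn_level x) hP hx hlevel
  intro y hy
  rw [hT.level_eq (hfT (mem_image_of_mem f (hPS hy))),
    hT.level_eq (hfT (mem_image_of_mem f (hPS hx)))]

theorem IsStratifiedMap.exists_isStratum_image_subset (hf : IsStratifiedMap F F' f) {T : Set Y}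
    (hT : F'.IsStratum T) (hx : f x ∈ T) :
    ∃ S, F.IsStratum S ∧ x ∈ S ∧ f '' S ⊆ T ∧ F'.codim T ≤ F.codim S := by
  have hS := F.isStratumDim_connectedComponentIn x
  have hxS := F.mem_connectedComponentIn_level x
  obtain ⟨T', ⟨j, hT'⟩, hfT', hcodim⟩ := hf.2 _ ⟨_, hS⟩
  obtain ⟨i, hT⟩ := hT
  obtain rfl := hT'.eq_of_mem hT (hfT' (mem_image_of_mem f hxS)) hx
  exact ⟨_, ⟨_, hS⟩, hxS, hfT', hcodim⟩

end FilteredSpace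

section Simplex

variable {m : ℕ}

def openFace (t : TSimp m) : Set (TSimp m) := {s | Function.support s.1 = Function.support t.1}

theorem vert_apply (j i : Fin (m+1)) : (vert m j).1 i = if i = j then 1 else 0 := rfl

theorem support_vert (j : Fin (m+1)) : Function.support (vert m j).1 = {j} := by
  ext i
  simp [vert_apply]

theorem support_nonempty (t : TSimp m) : (Function.support t.1).Nonempty :=
  Function.support_nonempty_iff.2 fun h => by simpa [h] using t.2.2

theorem exists_support_eq_pair (j j' : Fin (m+1)) :
    ∃ t : TSimp m, Function.support t.1 = {j, j'} := by
  refine ⟨⟨(1 / 2 : ℝ) • (vert m j).1 + (1 / 2 : ℝ) • (vert m j').1, convex_stdSimplex ℝ _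
    (vert m j).2 (vert m j').2 (by norm_num) (by norm_num) (by norm_num)⟩, ?_⟩
  ext i
  simp only [Function.mem_support, Pi.add_apply, Pi.smul_apply, smul_eq_mul, vert_apply]
  split_ifs <;> simp_all

theorem isPreconnected_openFace (t : TSimp m) : IsPreconnected (openFace t) := by
  rw [← Topology.IsInducing.subtypeVal.isPreconnected_image]
  refine Convex.isPreconnected ?_
  rintro _ ⟨x, hx, rfl⟩ _ ⟨y, hy, rfl⟩ a b ha hb hab
  refine ⟨⟨_, convex_stdSimplex ℝ _ x.2 y.2 ha hb hab⟩, ?_, rfl⟩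
  ext i
  have hxi := Set.ext_iff.1 hx i
  have hyi := Set.ext_iff.1 hy i
  simp only [Function.mem_support, Pi.add_apply, Pi.smul_apply, smul_eq_mul] at hxi hyi ⊢
  by_cases hti : t.1 i = 0
  · simp_all
  · have hpos := convex_Ioi (0 : ℝ) (lt_of_le_of_ne (x.2.1 i) (Ne.symm (hxi.2 hti)))
      (lt_of_le_of_ne (y.2.1 i) (Ne.symm (hyi.2 hti))) ha hb hab
    simp only [smul_eq_mul, mem_Ioi] at hpos
    exact iff_of_true hpos.ne' hti

theorem vert_mem_closure_openFace {t : TSimp m} {j : Fin (m+1)}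
    (hj : j ∈ Function.support t.1) : vert m j ∈ closure (openFace t) := by
  rw [closure_subtype]
  refine (segment_subset_closure_openSegment.trans (closure_mono ?_))
    (right_mem_segment ℝ t.1 (vert m j).1)
  rintro _ ⟨a, b, ha, hb, hab, rfl⟩
  refine ⟨⟨_, convex_stdSimplex ℝ _ t.2 (vert m j).2 ha.le hb.le hab⟩, ?_, rfl⟩
  ext i
  simp only [Function.mem_support, Pi.add_apply, Pi.smul_apply, smul_eq_mul, vert_apply]
  rcases eq_or_ne i j with rfl | hij
  · have := mul_nonneg ha.le (t.2.1 i)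
    exact iff_of_true (by simp only [if_true, mul_one]; linarith) hj
  · simp [hij, ha.ne']

theorem faceMap_vert (j : Fin (m+2)) (k : Fin (m+1)) :
    faceMap m j (vert m k) = vert (m+1) (j.succAbove k) := by
  apply Subtype.ext
  funext i
  refine Fin.succAboveCases j ?_ (fun l => ?_) i
  · simp [faceMap, vert_apply, (Fin.succAbove_ne j k).symm]
  · simp [faceMap, vert_apply, Fin.succAbove_right_injective.eq_iff]

end Simplex

namespace PreSimplex

open FilteredSpace

variable {F : FilteredSpace X} {F' : FilteredSpace Y} {m : ℕ} {σ : PreSimplex X m}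

theorem isFiltered_iff : σ.IsFiltered F ↔
    Monotone σ.block ∧ ∀ t, IsLUB (σ.block '' Function.support t.1) (F.level (σ.map t)) := by
  refine and_congr_right fun _ => ?_
  simp only [Set.ext_iff, mem_preimage, F.mem_filt_iff_level_le, isLUB_iff_le_iff,
    mem_upperBounds, forall_mem_image, Function.mem_support, mem_ofPred_eq]
  exact forall_comm

namespace IsFiltered

theorem level_vert (hσ : σ.IsFiltered F) (j : Fin (m+1)) :
    F.level (σ.map (vert m j)) = σ.block j := by
  have h := (isFiltered_iff.1 hσ).2 (vert m j)
  rw [support_vert, image_singleton] at h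
  exact h.unique isLUB_singleton

theorem level_eq_of_mem_openFace (hσ : σ.IsFiltered F) {s t : TSimp m} (hs : s ∈ openFace t) :
    F.level (σ.map s) = F.level (σ.map t) := by
  have h := (isFiltered_iff.1 hσ).2 s
  rw [show Function.support s.1 = _ from hs] at h
  exact h.unique ((isFiltered_iff.1 hσ).2 t)

theorem exists_block_eq_level (hσ : σ.IsFiltered F) (t : TSimp m) :
    ∃ j ∈ Function.support t.1, σ.block j = F.level (σ.map t) := by
  have hne := (support_nonempty t).image σ.block
  have hmem := hne.csSup_mem ((toFinite _).image _)
  rwa [((isFiltered_iff.1 hσ).2 t).csSup_eq hne] at hmem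

variable {f : X → Y}

theorem level_comp_vert_le (hσ : σ.IsFiltered F) (hf : IsStratifiedMap F F' f)
    {t : TSimp m} {j : Fin (m+1)} (hj : j ∈ Function.support t.1) :
    F'.level (f (σ.map (vert m j))) ≤ F'.level (f (σ.map t)) := by
  have hconst := hf.level_eq_of_isPreconnected
    ((isPreconnected_openFace t).image _ σ.map.continuous.continuousOn)
    (mem_image_of_mem _ (show t ∈ openFace t from rfl))
    (by rintro _ ⟨s, hs, rfl⟩; exact hσ.level_eq_of_mem_openFace hs)
  refine F'.level_le_of_mem_closure (s := f '' (σ.map '' openFace t))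
    (by rintro _ ⟨y, hy, rfl⟩; exact (hconst y hy).le) ?_
  exact image_closure_subset_closure_image hf.1 <| mem_image_of_mem f <|
    image_closure_subset_closure_image σ.map.continuous <|
      mem_image_of_mem _ (vert_mem_closure_openFace hj)

theorem level_comp_vert_eq (hσ : σ.IsFiltered F) (hf : IsStratifiedMap F F' f)
    {t : TSimp m} {j : Fin (m+1)} (hj : j ∈ Function.support t.1)
    (hmax : σ.block j = F.level (σ.map t)) :
    F'.level (f (σ.map (vert m j))) = F'.level (f (σ.map t)) := by
  have hP : IsPreconnected (openFace t ∪ {vert m j}) :=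
    (isPreconnected_openFace t).subset_closure subset_union_left
      (union_subset subset_closure (singleton_subset_iff.2 (vert_mem_closure_openFace hj)))
  refine hf.level_eq_of_isPreconnected (hP.image _ σ.map.continuous.continuousOn)
    (mem_image_of_mem _ (Or.inl rfl)) ?_ _ (mem_image_of_mem _ (Or.inr rfl))
  rintro _ ⟨s, hs | rfl, rfl⟩
  · exact hσ.level_eq_of_mem_openFace hs
  · rw [hσ.level_vert, hmax]

end IsFiltered

end PreSimplex

section Pushforward

open FilteredSpace PreSimplex

variable {F : FilteredSpace X} {F' : FilteredSpace Y} {f : C(X, Y)} {m : ℕ} {σ : PreSimplex X m}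

theorem pushSimp_isFiltered (hf : IsStratifiedMap F F' f) (hσ : σ.IsFiltered F) :
    (pushSimp F' f σ).IsFiltered F' := by
  have hblock (j) : (pushSimp F' f σ).block j = F'.level (f (σ.map (vert m j))) := rfl
  refine isFiltered_iff.2 ⟨fun j j' hjj' => ?_, fun t => ?_⟩
  · obtain ⟨t, ht⟩ := exists_support_eq_pair (m := m) j j'
    have hlevel : σ.block j' = F.level (σ.map t) := by
      have h := (isFiltered_iff.1 hσ).2 t
      rw [ht, image_pair] at h
      rw [h.unique isLUB_pair, sup_eq_right.2 (hσ.1 hjj')]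
    rw [hblock, hblock, hσ.level_comp_vert_eq hf (by simp [ht]) hlevel]
    exact hσ.level_comp_vert_le hf (by simp [ht])
  · obtain ⟨js, hjs, hmax⟩ := hσ.exists_block_eq_level t
    refine IsGreatest.isLUB ⟨⟨js, hjs, hσ.level_comp_vert_eq hf hjs hmax⟩, ?_⟩
    rintro _ ⟨j, hj, rfl⟩
    exact hσ.level_comp_vert_le hf hj

theorem pushSimp_admissible {p : Set X → ℤ} {q : Set Y → ℤ} (hp : F.IsPerversity p)
    (hq : F'.IsPerversity q) (hf : IsStratifiedMap F F' f)
    (hpq : ∀ S T, F.IsStratum S → F'.IsStratum T → f '' S ⊆ T →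
      F'.dualPerv q T ≤ F.dualPerv p S)
    (hσ : σ.Admissible F p) : (pushSimp F' f σ).Admissible F' q := by
  intro T hT t ht
  obtain ⟨S, hS, htS, hfST, hcodim⟩ := hf.exists_isStratum_image_subset hT ht
  have := hσ S hS t htS
  have := codim_sub_le_of_dualPerv_le hp hq hT hcodim (hpq S T hS hT hfST)
  omega

theorem pushSimp_face (τ : PreSimplex X (m+1)) (j : Fin (m+2)) :
    (pushSimp F' f τ).face j = pushSimp F' f (τ.face j) := by
  simp only [pushSimp, PreSimplex.face, PreSimplex.mk.injEq]
  refine ⟨rfl, funext fun k => ?_⟩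
  simp [canonicalBlock, faceMap_vert]

variable (F' f) (G : Type w) [AddCommGroup G]

theorem pushChain_comp_bdry (m : ℕ) :
    (pushChain F' f G m).comp ((filtSys X).bdry G m) =
      ((filtSys Y).bdry G m).comp (pushChain F' f G (m+1)) := by
  refine Finsupp.addHom_ext fun σ g => ?_
  simp [pushChain, SimpSystem.bdry, Finsupp.mapDomain_single, pushSimp_face]

theorem pushChain_bdryFrom (m : ℕ) (ξ : (filtSys X).Chains G m) :
    pushChain F' f G (m-1) ((filtSys X).bdryFrom G m ξ) =
      (filtSys Y).bdryFrom G m (pushChain F' f G m ξ) := by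
  cases m with
  | zero => exact map_zero _
  | succ m => exact DFunLike.congr_fun (pushChain_comp_bdry F' f G m) ξ

variable {F' f G}

theorem pushChain_mem_suppIn {P : PreSimplex X m → Prop} {Q : PreSimplex Y m → Prop}
    (hPQ : ∀ σ, P σ → Q (pushSimp F' f σ)) {ξ : (filtSys X).Chains G m}
    (hξ : ξ ∈ (filtSys X).suppIn G P) : pushChain F' f G m ξ ∈ (filtSys Y).suppIn G Q := by
  classical
  intro τ hτ
  obtain ⟨σ, hσ, rfl⟩ := Finset.mem_image.1 (Finsupp.mapDomain_support hτ)
  exact hPQ σ (hξ σ hσ)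

end Pushforward

theorem stratified_map_induces_chain_map_general
    {X : Type u} {Y : Type v} [TopologicalSpace X] [TopologicalSpace Y]
    (F : FilteredSpace X) (F' : FilteredSpace Y)
    (p : Set X → ℤ) (q : Set Y → ℤ) (hp : F.IsPerversity p) (hq : F'.IsPerversity q)
    (f : C(X, Y)) (hf : FilteredSpace.IsStratifiedMap F F' ⇑f)
    (hpq : ∀ S T, F.IsStratum S → F'.IsStratum T → ⇑f '' S ⊆ T →
      F'.dualPerv q T ≤ F.dualPerv p S)
    (G : Type w) [AddCommGroup G] :
    ∀ (m : ℕ) (ξ : (filtSys X).Chains G m), ξ ∈ iChains F p G Set.univ m →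
      pushChain F' f G m ξ ∈ iChains F' q G Set.univ m ∧
        pushChain F' f G (m-1) ((filtSys X).bdryFrom G m ξ) =
          (filtSys Y).bdryFrom G m (pushChain F' f G m ξ) := by
  intro m ξ hξ
  have hallow {k : ℕ} (σ : PreSimplex X k) (hσ : Allowable F p univ σ) :
      Allowable F' q univ (pushSimp F' f σ) :=
    ⟨pushSimp_isFiltered hf hσ.1, pushSimp_admissible hp hq hf hpq hσ.2.1, subset_univ _⟩
  have hbdry := pushChain_bdryFrom F' f G m ξ
  refine ⟨⟨pushChain_mem_suppIn hallow hξ.1, AddSubgroup.mem_comap.2 ?_⟩, hbdry⟩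
  rw [← hbdry]
  exact pushChain_mem_suppIn hallow hξ.2

theorem stratified_map_induces_chain_map
    {X : Type u} {Y : Type v} [TopologicalSpace X] [TopologicalSpace Y]
    [T2Space X] [T2Space Y]
    (F : FilteredSpace X) (F' : FilteredSpace Y)
    (hX : F.IsStratifiedSpace) (hY : F'.IsStratifiedSpace)
    (p : Set X → ℤ) (q : Set Y → ℤ) (hp : F.IsPerversity p) (hq : F'.IsPerversity q)
    (f : C(X, Y)) (hf : FilteredSpace.IsStratifiedMap F F' ⇑f)
    (hpq : ∀ S T, F.IsStratum S → F'.IsStratum T → ⇑f '' S ⊆ T →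
      F'.dualPerv q T ≤ F.dualPerv p S)
    (G : Type w) [AddCommGroup G] :
    ∀ (m : ℕ) (ξ : (filtSys X).Chains G m), ξ ∈ iChains F p G Set.univ m →
      pushChain F' f G m ξ ∈ iChains F' q G Set.univ m ∧
        pushChain F' f G (m-1) ((filtSys X).bdryFrom G m ξ) =
          (filtSys Y).bdryFrom G m (pushChain F' f G m ξ) :=
  stratified_map_induces_chain_map_general F F' p q hp hq f hf hpq G

end
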